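/- Let N ≥ 2, let Ω ⊂ ℝ^N be a bounded domain with C³ boundary and unit volume, p ∈ (1, p_N), λ ≥ 0, and let (α, ψ) be a solution of problem (P)_λ on Ω. Then α + λ⟨ψ⟩ = 1/m, and if φ ∈ C²(Ω̄) with φ = 0 on ∂Ω satisfies −Δφ = (pλ + σ) V [φ] in Ω for some σ ∈ ℝ, then (α + λ⟨ψ⟩) ⟨φ⟩ = (λ(p−1) + σ) ⟨ψ [φ]⟩, i.e. (1/m)⟨φ⟩ = (λ(p−1) + σ) ⟨ψ [φ]⟩. -/

import Mathlib

open MeasureTheory Metric Set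

noncomputable section

/-- The Laplacian of a function on Euclidean space. -/
def lapl {N : ℕ} (f : EuclideanSpace ℝ (Fin N) → ℝ) (x : EuclideanSpace ℝ (Fin N)) : ℝ :=
  ∑ i : Fin N,
    fderiv ℝ (fun y => fderiv ℝ f y (EuclideanSpace.single i (1 : ℝ))) x
      (EuclideanSpace.single i (1 : ℝ))

/-- `(α, ψ)` is a solution of problem `(P)_λ` on `Ω`:
`ψ ∈ C²`, `-Δψ = (max (α + λψ) 0)^p` in `Ω`, `ψ = 0` on `∂Ω`, and
`∫_Ω (max (α + λψ) 0)^p = 1`. -/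
def IsSol {N : ℕ} (Ω : Set (EuclideanSpace ℝ (Fin N))) (p lam α : ℝ)
    (ψ : EuclideanSpace ℝ (Fin N) → ℝ) : Prop :=
  ContDiff ℝ 2 ψ ∧
  (∀ x ∈ Ω, -lapl ψ x = (max (α + lam * ψ x) 0) ^ p) ∧
  (∀ x ∈ frontier Ω, ψ x = 0) ∧
  (∫ x in Ω, (max (α + lam * ψ x) 0) ^ p) = 1

/-- The weight `V = (max (α + λψ) 0)^(p-1)`. -/
def Vfun {N : ℕ} (p lam α : ℝ) (ψ : EuclideanSpace ℝ (Fin N) → ℝ)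
    (x : EuclideanSpace ℝ (Fin N)) : ℝ :=
  (max (α + lam * ψ x) 0) ^ (p - 1)

/-- `m = ∫_Ω V`. -/
def mV {N : ℕ} (Ω : Set (EuclideanSpace ℝ (Fin N))) (p lam α : ℝ)
    (ψ : EuclideanSpace ℝ (Fin N) → ℝ) : ℝ :=
  ∫ x in Ω, Vfun p lam α ψ x

/-- The weighted average `⟨φ⟩ = (∫_Ω V φ) / m`. -/
def avgV {N : ℕ} (Ω : Set (EuclideanSpace ℝ (Fin N))) (p lam α : ℝ)
    (ψ φ : EuclideanSpace ℝ (Fin N) → ℝ) : ℝ :=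
  (∫ x in Ω, Vfun p lam α ψ x * φ x) / mV Ω p lam α ψ

/-- `σ` is an eigenvalue of the linearized operator `L_λ` at the solution `(α, ψ)`:
there is a nontrivial `φ ∈ C²(Ω̄)` vanishing on `∂Ω` with `-Δφ = (pλ + σ) V [φ]` in `Ω`. -/
def IsEigen {N : ℕ} (Ω : Set (EuclideanSpace ℝ (Fin N))) (p lam α : ℝ)
    (ψ : EuclideanSpace ℝ (Fin N) → ℝ) (σ : ℝ) : Prop :=
  ∃ φ : EuclideanSpace ℝ (Fin N) → ℝ, ContDiff ℝ 2 φ ∧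
    (∃ x ∈ closure Ω, φ x ≠ 0) ∧ (∀ x ∈ frontier Ω, φ x = 0) ∧
    ∀ x ∈ Ω, -lapl φ x = (p * lam + σ) * (Vfun p lam α ψ x * (φ x - avgV Ω p lam α ψ φ))

/-- `Ω` is a bounded domain of class `C³`: open, connected, bounded, and near every
boundary point `Ω` is the sublevel set of a `C³` function with nonvanishing gradient. -/
def IsC3Domain {N : ℕ} (Ω : Set (EuclideanSpace ℝ (Fin N))) : Prop :=
  IsOpen Ω ∧ IsConnected Ω ∧ Bornology.IsBounded Ω ∧
  ∀ x ∈ frontier Ω, ∃ (U : Set (EuclideanSpace ℝ (Fin N)))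
      (f : EuclideanSpace ℝ (Fin N) → ℝ),
    IsOpen U ∧ x ∈ U ∧ ContDiff ℝ 3 f ∧ (∀ y ∈ U, fderiv ℝ f y ≠ 0) ∧
    Ω ∩ U = {y ∈ U | f y < 0}

/-!
Since `(α + λψ)₊ ^ p = V (α + λψ)`, the normalisation `∫ (α + λψ)₊ ^ p = 1` reads
`α m + λ m ⟨ψ⟩ = 1`. For the eigenfunction equation, Green's identity
`∫ φ (-Δψ) = ∫ ψ (-Δφ)` evaluates `∫ (α + λψ)₊ ^ p φ` as `(pλ + σ) m ⟨ψ [φ]⟩`, while splitting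
`ψ φ = ψ [φ] + ⟨φ⟩ ψ` evaluates it as `α m ⟨φ⟩ + λ m (⟨φ⟩ ⟨ψ⟩ + ⟨ψ [φ]⟩)`; comparing the two
gives the second identity.

Green's identity is `∫_Ω ∂ᵢ W = 0` for `W = f ∂ᵢ g - g ∂ᵢ f`, which vanishes on `∂Ω`. By Fubini
this reduces to lines parallel to the `i`-th axis, where it is the fundamental theorem of calculus
on each of the countably many open intervals composing the slice of `Ω`: their endpoints lie on
`∂Ω`.
-/

section IntegrableOn

variable {X E : Type*} [MetricSpace X] [ProperSpace X] [MeasurableSpace X]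
  [OpensMeasurableSpace X] {μ : Measure X} [IsFiniteMeasureOnCompacts μ] [NormedAddCommGroup E]

theorem Continuous.integrableOn_of_isBounded {f : X → E} (hf : Continuous f) {s : Set X}
    (hs : Bornology.IsBounded s) : IntegrableOn f s μ :=
  (hf.continuousOn.integrableOn_compact hs.isCompact_closure).mono_set subset_closure

end IntegrableOn

section ConnectedComponents

theorem IsOpen.mem_connectedComponentIn_of_mem_closure {X : Type*} [TopologicalSpace X]
    [LocallyConnectedSpace X] {u : Set X} (hu : IsOpen u) {x y : X}
    (hy : y ∈ closure (connectedComponentIn u x)) (hyu : y ∈ u) :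
    y ∈ connectedComponentIn u x := by
  obtain ⟨z, hzy, hzx⟩ := mem_closure_iff.1 hy _ hu.connectedComponentIn
    (mem_connectedComponentIn hyu)
  rw [connectedComponentIn_eq hzx, ← connectedComponentIn_eq hzy]
  exact mem_connectedComponentIn hyu

theorem pairwiseDisjoint_connectedComponentIn {X : Type*} [TopologicalSpace X] (u : Set X) :
    (connectedComponentIn u '' u).PairwiseDisjoint id := by
  rintro _ ⟨x, -, rfl⟩ _ ⟨y, -, rfl⟩ hne
  refine disjoint_left.2 fun z hzx hzy => hne ?_
  rw [connectedComponentIn_eq hzx, connectedComponentIn_eq hzy]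

theorem IsOpen.connectedComponentIn_eq_Ioo {u : Set ℝ} (hu : IsOpen u)
    (hub : Bornology.IsBounded u) {x : ℝ} (hx : x ∈ u) :
    ∃ a b, connectedComponentIn u x = Ioo a b ∧ a ∈ frontier u ∧ b ∈ frontier u := by
  set C := connectedComponentIn u x
  have hCu : C ⊆ u := connectedComponentIn_subset u x
  have hCo : IsOpen C := hu.connectedComponentIn
  have hCc : IsConnected C := isConnected_connectedComponentIn_iff.2 hx
  have hCb : Bornology.IsBounded C := hub.subset hCu
  have hinf_mem := csInf_mem_closure hCc.nonempty hCb.bddBelow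
  have hsup_mem := csSup_mem_closure hCc.nonempty hCb.bddAbove
  -- an endpoint lying in `u` would lie in the open set `C`, which contains no extremum
  have hinf : sInf C ∉ u := fun h => by
    obtain ⟨y, hy, hyC⟩ := ((frequently_lt_nhds (sInf C)).and_eventually
      (hCo.mem_nhds (hu.mem_connectedComponentIn_of_mem_closure hinf_mem h))).exists
    exact (csInf_le hCb.bddBelow hyC).not_gt hy
  have hsup : sSup C ∉ u := fun h => by
    obtain ⟨y, hy, hyC⟩ := ((frequently_gt_nhds (sSup C)).and_eventually
      (hCo.mem_nhds (hu.mem_connectedComponentIn_of_mem_closure hsup_mem h))).exists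
    exact (le_csSup hCb.bddAbove hyC).not_gt hy
  refine ⟨sInf C, sSup C, ?_, ?_, ?_⟩
  · refine (hCc.Ioo_csInf_csSup_subset hCb.bddBelow hCb.bddAbove).antisymm' fun y hy => ?_
    obtain ⟨h1, h2⟩ := subset_Icc_csInf_csSup hCb.bddBelow hCb.bddAbove hy
    exact ⟨h1.lt_of_ne fun h => hinf (h ▸ hCu hy), h2.lt_of_ne fun h => hsup (h ▸ hCu hy)⟩
  · rw [hu.frontier_eq]
    exact ⟨closure_mono hCu hinf_mem, hinf⟩
  · rw [hu.frontier_eq]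
    exact ⟨closure_mono hCu hsup_mem, hsup⟩

end ConnectedComponents

section Slicing

variable {E F : Type*} [NormedAddCommGroup E] [NormedSpace ℝ E]
  [NormedAddCommGroup F] [NormedSpace ℝ F]

theorem integral_Ioo_deriv_eq_sub [CompleteSpace F] {G : ℝ → F} (hG : ContDiff ℝ 1 G)
    {a b : ℝ} (hab : a ≤ b) : ∫ t in Ioo a b, deriv G t = G b - G a := by
  rw [← integral_Ioc_eq_integral_Ioo, ← intervalIntegral.integral_of_le hab,
    intervalIntegral.integral_deriv_eq_sub (fun t _ => hG.differentiable one_ne_zero t)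
      ((hG.continuous_deriv le_rfl).intervalIntegrable _ _)]

theorem IsOpen.setIntegral_deriv_eq_zero [CompleteSpace F] {u : Set ℝ} (hu : IsOpen u)
    (hub : Bornology.IsBounded u) {G : ℝ → F} (hG : ContDiff ℝ 1 G)
    (hG0 : ∀ t ∈ frontier u, G t = 0) : ∫ t in u, deriv G t = 0 := by
  set 𝒞 := connectedComponentIn u '' u
  have hdisj := pairwiseDisjoint_connectedComponentIn u
  have : Countable 𝒞 := Set.Countable.to_subtype <| hdisj.countable_of_isOpen
    (by rintro _ ⟨x, -, rfl⟩; exact hu.connectedComponentIn)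
    (by rintro _ ⟨x, hx, rfl⟩; exact ⟨x, mem_connectedComponentIn hx⟩)
  have hu𝒞 : u = ⋃ C : 𝒞, (C : Set ℝ) := by
    rw [← sUnion_eq_iUnion, sUnion_image]
    exact (iUnion₂_subset fun x _ => connectedComponentIn_subset u x).antisymm'
      fun x hx => mem_biUnion hx (mem_connectedComponentIn hx)
  have hmeas : ∀ C : 𝒞, MeasurableSet (C : Set ℝ) := by
    rintro ⟨_, x, -, rfl⟩
    exact hu.connectedComponentIn.measurableSet
  have hzero : ∀ C : 𝒞, ∫ t in (C : Set ℝ), deriv G t = 0 := by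
    rintro ⟨_, x, hx, rfl⟩
    obtain ⟨a, b, hC, ha, hb⟩ := hu.connectedComponentIn_eq_Ioo hub hx
    have hab : a < b := nonempty_Ioo.1 (hC ▸ ⟨x, mem_connectedComponentIn hx⟩)
    change ∫ t in connectedComponentIn u x, deriv G t = 0
    rw [hC, integral_Ioo_deriv_eq_sub hG hab.le, hG0 a ha, hG0 b hb, sub_zero]
  rw [hu𝒞, integral_iUnion hmeas (fun C D hne => hdisj C.2 D.2 (Subtype.coe_injective.ne hne))
    (hu𝒞 ▸ (hG.continuous_deriv le_rfl).integrableOn_of_isBounded hub)]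
  simp only [hzero, tsum_zero]

theorem antilipschitzWith_line (c : E) {v : E} (hv : v ≠ 0) :
    AntilipschitzWith ‖v‖₊⁻¹ fun t : ℝ => c + t • v := by
  refine AntilipschitzWith.of_le_mul_dist fun s t => le_of_eq ?_
  rw [dist_add_left, dist_eq_norm (s • v), ← sub_smul, norm_smul, NNReal.coe_inv, coe_nnnorm,
    inv_mul_eq_div, mul_div_cancel_right₀ _ (norm_ne_zero_iff.2 hv), Real.dist_eq,
    Real.norm_eq_abs]

theorem IsOpen.integral_indicator_fderiv_line_eq_zero [CompleteSpace F] {Ω : Set E}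
    (hO : IsOpen Ω) (hb : Bornology.IsBounded Ω) {g : E → F} (hg : ContDiff ℝ 1 g)
    (hg0 : ∀ x ∈ frontier Ω, g x = 0) (c : E) {v : E} (hv : v ≠ 0) :
    ∫ t : ℝ, Ω.indicator (fun x => fderiv ℝ g x v) (c + t • v) = 0 := by
  set ℓ : ℝ → E := fun t => c + t • v
  have hℓ : ContDiff ℝ 1 ℓ := by fun_prop
  have hderiv : ∀ t, deriv (g ∘ ℓ) t = fderiv ℝ g (ℓ t) v := fun t => by
    have hℓ' : HasDerivAt ℓ v t := by
      simpa only [one_smul] using ((hasDerivAt_id' t).smul_const v).const_add c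
    exact ((hg.differentiable one_ne_zero _).hasFDerivAt.comp_hasDerivAt t hℓ').deriv
  have hu : IsOpen (ℓ ⁻¹' Ω) := hO.preimage hℓ.continuous
  have hind : ∀ t, Ω.indicator (fun x => fderiv ℝ g x v) (c + t • v) =
      (ℓ ⁻¹' Ω).indicator (deriv (g ∘ ℓ)) t := fun t => by
    by_cases ht : c + t • v ∈ Ω <;> simp [ℓ, ht, hderiv]
  simp_rw [hind, integral_indicator hu.measurableSet]
  exact hu.setIntegral_deriv_eq_zero ((antilipschitzWith_line c hv).isBounded_preimage hb)
    (hg.comp hℓ) fun t ht => hg0 _ (hℓ.continuous.frontier_preimage_subset Ω ht)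

theorem integral_eq_zero_of_integral_line_eq_zero {N : ℕ} (i : Fin N)
    {f : EuclideanSpace ℝ (Fin N) → F} (hf : Integrable f)
    (hline : ∀ c, ∫ t : ℝ, f (c + t • EuclideanSpace.single i 1) = 0) :
    ∫ x, f x = 0 := by
  obtain ⟨n, rfl⟩ : ∃ n, N = n + 1 := Nat.exists_eq_add_one.2 i.pos
  let e : (ℝ × (Fin n → ℝ)) ≃ᵐ EuclideanSpace ℝ (Fin (n + 1)) :=
    (MeasurableEquiv.piFinSuccAbove (fun _ => ℝ) i).symm.trans
      (MeasurableEquiv.toLp 2 (Fin (n + 1) → ℝ))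
  have he : MeasurePreserving e (volume.prod volume) volume := by
    rw [← Measure.volume_eq_prod]
    exact (EuclideanSpace.volume_preserving_symm_measurableEquiv_toLp _).symm.comp
      (volume_preserving_piFinSuccAbove (fun _ => ℝ) i).symm
  have he_line : ∀ t y, e (t, y) = e (0, y) + t • EuclideanSpace.single i 1 := by
    intro t y
    ext j
    rcases eq_or_ne j i with rfl | hne
    · simp [e]
    · obtain ⟨k, rfl⟩ := Fin.exists_succAbove_eq hne
      simp [e, hne]
  have hslice : ∀ y, ∫ t, f (e (t, y)) = 0 := fun y => by
    simpa only [← he_line] using hline (e (0, y))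
  rw [← he.integral_comp e.measurableEmbedding,
    integral_prod_symm (fun z => f (e z)) ((he.integrable_comp_emb e.measurableEmbedding).2 hf)]
  simp only [hslice, integral_zero]

end Slicing

def coordDeriv {N : ℕ} (i : Fin N) (f : EuclideanSpace ℝ (Fin N) → ℝ)
    (x : EuclideanSpace ℝ (Fin N)) : ℝ :=
  fderiv ℝ f x (EuclideanSpace.single i 1)

section Green

variable {N : ℕ} {Ω : Set (EuclideanSpace ℝ (Fin N))} {f g : EuclideanSpace ℝ (Fin N) → ℝ}

theorem lapl_eq_sum_coordDeriv : lapl f = fun x => ∑ i, coordDeriv i (coordDeriv i f) x := rfl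

theorem ContDiff.coordDeriv {m n : WithTop ℕ∞} (hf : ContDiff ℝ n f) (hmn : m + 1 ≤ n)
    (i : Fin N) : ContDiff ℝ m (coordDeriv i f) :=
  (hf.fderiv_right hmn).clm_apply contDiff_const

theorem ContDiff.continuous_lapl (hf : ContDiff ℝ 2 f) : Continuous (lapl f) :=
  lapl_eq_sum_coordDeriv (f := f) ▸ continuous_finsetSum _ fun i _ =>
    ((hf.coordDeriv one_add_one_eq_two.le i).coordDeriv (zero_add 1).le i).continuous

theorem coordDeriv_mul_coordDeriv_sub (hf : ContDiff ℝ 2 f) (hg : ContDiff ℝ 2 g) (i : Fin N)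
    (x : EuclideanSpace ℝ (Fin N)) :
    coordDeriv i (fun y => f y * coordDeriv i g y - g y * coordDeriv i f y) x =
      f x * coordDeriv i (coordDeriv i g) x - g x * coordDeriv i (coordDeriv i f) x := by
  have hd : ∀ {h : EuclideanSpace ℝ (Fin N) → ℝ}, ContDiff ℝ 1 h → DifferentiableAt ℝ h x :=
    fun h => h.differentiable one_ne_zero x
  have hf' := hd (hf.of_le one_le_two)
  have hg' := hd (hg.of_le one_le_two)
  have hdf := hd (hf.coordDeriv one_add_one_eq_two.le i)
  have hdg := hd (hg.coordDeriv one_add_one_eq_two.le i)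
  rw [coordDeriv, fderiv_fun_sub (hf'.fun_mul hdg) (hg'.fun_mul hdf), fderiv_fun_mul hf' hdg,
    fderiv_fun_mul hg' hdf]
  simp only [sub_apply, add_apply, smul_apply, smul_eq_mul, coordDeriv]
  ring

theorem IsOpen.setIntegral_coordDeriv_eq_zero (hO : IsOpen Ω) (hb : Bornology.IsBounded Ω)
    (hg : ContDiff ℝ 1 g) (hg0 : ∀ x ∈ frontier Ω, g x = 0) (i : Fin N) :
    ∫ x in Ω, coordDeriv i g x = 0 := by
  rw [← integral_indicator hO.measurableSet]
  refine integral_eq_zero_of_integral_line_eq_zero i ?_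
    fun c => hO.integral_indicator_fderiv_line_eq_zero hb hg hg0 c ?_
  · exact ((hg.coordDeriv (zero_add 1).le i).continuous.integrableOn_of_isBounded
      hb).integrable_indicator hO.measurableSet
  · simp

theorem IsOpen.setIntegral_mul_lapl_comm (hO : IsOpen Ω) (hb : Bornology.IsBounded Ω)
    (hf : ContDiff ℝ 2 f) (hg : ContDiff ℝ 2 g) (hf0 : ∀ x ∈ frontier Ω, f x = 0)
    (hg0 : ∀ x ∈ frontier Ω, g x = 0) :
    ∫ x in Ω, f x * lapl g x = ∫ x in Ω, g x * lapl f x := by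
  have hW : ∀ i, ContDiff ℝ 1 fun y => f y * coordDeriv i g y - g y * coordDeriv i f y :=
    fun i => ((hf.of_le one_le_two).mul (hg.coordDeriv one_add_one_eq_two.le i)).sub
      ((hg.of_le one_le_two).mul (hf.coordDeriv one_add_one_eq_two.le i))
  have hdiv : ∀ x, f x * lapl g x - g x * lapl f x =
      ∑ i, coordDeriv i (fun y => f y * coordDeriv i g y - g y * coordDeriv i f y) x := by
    intro x
    simp only [lapl_eq_sum_coordDeriv, coordDeriv_mul_coordDeriv_sub hf hg, Finset.mul_sum,
      Finset.sum_sub_distrib]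
  rw [← sub_eq_zero, ← integral_sub
    ((hf.continuous.fun_mul hg.continuous_lapl).integrableOn_of_isBounded hb)
    ((hg.continuous.fun_mul hf.continuous_lapl).integrableOn_of_isBounded hb)]
  simp only [hdiv]
  rw [integral_finsetSum _ fun i _ =>
    ((hW i).coordDeriv (zero_add 1).le i).continuous.integrableOn_of_isBounded hb]
  exact Finset.sum_eq_zero fun i _ =>
    hO.setIntegral_coordDeriv_eq_zero hb (hW i) (fun x hx => by simp [hf0 x hx, hg0 x hx]) i

end Green

section Solution

variable {N : ℕ} {Ω : Set (EuclideanSpace ℝ (Fin N))} {p lam α : ℝ}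
  {ψ φ : EuclideanSpace ℝ (Fin N) → ℝ}

theorem Vfun_mul_eq_rpow (hp : 1 < p) (x : EuclideanSpace ℝ (Fin N)) :
    Vfun p lam α ψ x * (α + lam * ψ x) = max (α + lam * ψ x) 0 ^ p := by
  rcases le_or_gt (α + lam * ψ x) 0 with h | h
  · rw [Vfun, max_eq_right h, Real.zero_rpow (by linarith), zero_mul,
      Real.zero_rpow (by linarith)]
  · rw [Vfun, max_eq_left h.le, ← Real.rpow_add_one h.ne', sub_add_cancel]

theorem continuous_Vfun (hp : 1 < p) (hψ : Continuous ψ) : Continuous (Vfun p lam α ψ) :=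
  (by fun_prop : Continuous fun x => max (α + lam * ψ x) 0).rpow_const
    fun _ => Or.inr (by linarith)

theorem IsSol.setIntegral_Vfun_mul_eq_one (hsol : IsSol Ω p lam α ψ) (hp : 1 < p) :
    ∫ x in Ω, Vfun p lam α ψ x * (α + lam * ψ x) = 1 := by
  simpa only [Vfun_mul_eq_rpow hp] using hsol.2.2.2

theorem IsSol.mV_ne_zero (hsol : IsSol Ω p lam α ψ) (hb : Bornology.IsBounded Ω) (hp : 1 < p) :
    mV Ω p lam α ψ ≠ 0 := by
  intro hm
  have hV : Vfun p lam α ψ =ᵐ[volume.restrict Ω] 0 :=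
    (integral_eq_zero_iff_of_nonneg (fun x => Real.rpow_nonneg (le_max_right _ _) _)
      ((continuous_Vfun hp hsol.1.continuous).integrableOn_of_isBounded hb)).1 hm
  have h1 := hsol.setIntegral_Vfun_mul_eq_one hp
  rw [integral_eq_zero_of_ae (by filter_upwards [hV] with x hx; simp [hx])] at h1
  exact zero_ne_one h1

theorem IsSol.add_mul_avgV_self (hsol : IsSol Ω p lam α ψ) (hb : Bornology.IsBounded Ω)
    (hp : 1 < p) : α + lam * avgV Ω p lam α ψ ψ = 1 / mV Ω p lam α ψ := by
  have hV := continuous_Vfun (lam := lam) (α := α) hp hsol.1.continuous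
  have h1 := hsol.setIntegral_Vfun_mul_eq_one hp
  simp only [mul_add, mul_left_comm _ lam] at h1
  rw [integral_add ((hV.fun_mul continuous_const).integrableOn_of_isBounded hb)
    ((continuous_const.fun_mul (hV.fun_mul hsol.1.continuous)).integrableOn_of_isBounded hb),
    integral_mul_const, integral_const_mul, ← mV] at h1
  rw [avgV]
  field_simp [hsol.mV_ne_zero hb hp]
  linear_combination h1

theorem setIntegral_rpow_mul_eq (hb : Bornology.IsBounded Ω) (hp : 1 < p) (hψ : Continuous ψ)
    (hφ : Continuous φ) (c : ℝ) :
    ∫ x in Ω, max (α + lam * ψ x) 0 ^ p * φ x =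
      α * (∫ x in Ω, Vfun p lam α ψ x * φ x) +
        lam * (c * (∫ x in Ω, Vfun p lam α ψ x * ψ x) +
          ∫ x in Ω, Vfun p lam α ψ x * (ψ x * (φ x - c))) := by
  have hV := continuous_Vfun (lam := lam) (α := α) hp hψ
  have hsplit : ∀ x, max (α + lam * ψ x) 0 ^ p * φ x =
      α * (Vfun p lam α ψ x * φ x) + lam * (c * (Vfun p lam α ψ x * ψ x) +
        Vfun p lam α ψ x * (ψ x * (φ x - c))) := fun x => by
    rw [← Vfun_mul_eq_rpow hp]
    ring
  simp only [hsplit]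
  rw [integral_add, integral_const_mul, integral_const_mul, integral_add, integral_const_mul]
  all_goals exact Continuous.integrableOn_of_isBounded (by fun_prop) hb

theorem IsSol.setIntegral_rpow_mul_eq_of_neg_lapl (hsol : IsSol Ω p lam α ψ) (hO : IsOpen Ω)
    (hb : Bornology.IsBounded Ω) (hφ : ContDiff ℝ 2 φ) (hφ0 : ∀ x ∈ frontier Ω, φ x = 0)
    {k c : ℝ} (hφeq : ∀ x ∈ Ω, -lapl φ x = k * (Vfun p lam α ψ x * (φ x - c))) :
    ∫ x in Ω, max (α + lam * ψ x) 0 ^ p * φ x =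
      k * ∫ x in Ω, Vfun p lam α ψ x * (ψ x * (φ x - c)) := calc
  _ = ∫ x in Ω, -(φ x * lapl ψ x) := setIntegral_congr_fun hO.measurableSet fun x hx => by
        simp only [← hsol.2.1 x hx]; ring
  _ = ∫ x in Ω, -(ψ x * lapl φ x) := by
        rw [integral_neg, integral_neg, hO.setIntegral_mul_lapl_comm hb hφ hsol.1 hφ0 hsol.2.2.1]
  _ = ∫ x in Ω, k * (Vfun p lam α ψ x * (ψ x * (φ x - c))) :=
        setIntegral_congr_fun hO.measurableSet fun x hx => by
          simp only [← mul_neg, hφeq x hx]; ring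
  _ = _ := integral_const_mul _ _

end Solution

theorem stmt16_general (N : ℕ) (Ω : Set (EuclideanSpace ℝ (Fin N)))
    (hΩ : IsC3Domain Ω) (p : ℝ) (hp1 : 1 < p)
    (lam : ℝ) (α : ℝ) (ψ : EuclideanSpace ℝ (Fin N) → ℝ)
    (hsol : IsSol Ω p lam α ψ) :
    α + lam * avgV Ω p lam α ψ ψ = 1 / mV Ω p lam α ψ ∧
    ∀ (σ : ℝ) (φ : EuclideanSpace ℝ (Fin N) → ℝ), ContDiff ℝ 2 φ →
      (∀ x ∈ frontier Ω, φ x = 0) →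
      (∀ x ∈ Ω,
        -lapl φ x = (p * lam + σ) * (Vfun p lam α ψ x * (φ x - avgV Ω p lam α ψ φ))) →
      (α + lam * avgV Ω p lam α ψ ψ) * avgV Ω p lam α ψ φ =
        (lam * (p - 1) + σ) *
          ((∫ x in Ω, Vfun p lam α ψ x * (ψ x * (φ x - avgV Ω p lam α ψ φ))) /
            mV Ω p lam α ψ) := by
  obtain ⟨hO, -, hb, -⟩ := hΩ
  have hm := hsol.mV_ne_zero hb hp1
  refine ⟨hsol.add_mul_avgV_self hb hp1, fun σ φ hφ hφ0 hφeq => ?_⟩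
  have key := (setIntegral_rpow_mul_eq hb hp1 hsol.1.continuous hφ.continuous
    (avgV Ω p lam α ψ φ)).symm.trans (hsol.setIntegral_rpow_mul_eq_of_neg_lapl hO hb hφ hφ0 hφeq)
  simp only [avgV] at key ⊢
  field_simp at key ⊢
  linear_combination key

theorem stmt16 (N : ℕ) (hN : 2 ≤ N) (Ω : Set (EuclideanSpace ℝ (Fin N)))
    (hΩ : IsC3Domain Ω) (hvol : volume Ω = 1) (p : ℝ) (hp1 : 1 < p)
    (hpN : N = 2 ∨ p < (N : ℝ) / ((N : ℝ) - 2))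
    (lam : ℝ) (hlam : 0 ≤ lam) (α : ℝ) (ψ : EuclideanSpace ℝ (Fin N) → ℝ)
    (hsol : IsSol Ω p lam α ψ) :
    α + lam * avgV Ω p lam α ψ ψ = 1 / mV Ω p lam α ψ ∧
    ∀ (σ : ℝ) (φ : EuclideanSpace ℝ (Fin N) → ℝ), ContDiff ℝ 2 φ →
      (∀ x ∈ frontier Ω, φ x = 0) →
      (∀ x ∈ Ω,
        -lapl φ x = (p * lam + σ) * (Vfun p lam α ψ x * (φ x - avgV Ω p lam α ψ φ))) →
      (α + lam * avgV Ω p lam α ψ ψ) * avgV Ω p lam α ψ φ =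
        (lam * (p - 1) + σ) *
          ((∫ x in Ω, Vfun p lam α ψ x * (ψ x * (φ x - avgV Ω p lam α ψ φ))) /
            mV Ω p lam α ψ) :=
  stmt16_general N Ω hΩ p hp1 lam α ψ hsol

end
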